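/- arXiv:1410.1623 — 2 statements merged into one kernel-verified Lean document; each statement's English description precedes it below -/
import Mathlib

section
/- Let s ∈ (0,1), b > 0, K = s/b, and let g ∈ 𝒳_{a,b} have zero average (ĝ_0 ≡ 0). Then the truncated linear difference equation ψ(x+y,y) − ψ(x,y) = y·g^{<K}(x,y) has a unique solution ψ ∈ 𝒳_{a,b} with zero average, given in Fourier coefficients by ψ̂_k(y) = y ĝ_k(y)/(e^{2πiky} − 1) for 0 < |k| < K, and it satisfies ‖ψ‖_{a,b} ≤ ω(s) ‖g‖_{a,b}, where ω(s) = (1/2π) · max_{|z| ≤ 2πs} |z/(e^z − 1)|. -/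
/-- `ω(s) = (1/2π) max_{|z|≤2πs} |z/(e^z−1)|`. -/
noncomputable def smallOmega (s : ℝ) : ℝ :=
  (1 / (2 * Real.pi)) * ⨆ z : {z : ℂ // ‖z‖ ≤ 2 * Real.pi * s}, ‖(z : ℂ) / (Complex.exp z - 1)‖

/-- The Fourier norm `‖g‖_{a,b} = ∑_{k∈ℤ} ‖ĝ_k‖_b e^{2π|k|a}`, expressed in terms of the
Fourier coefficients `ghat`. -/
noncomputable def fourierNorm (a b : ℝ) (ghat : ℤ → ℂ → ℂ) : ℝ :=
  ∑' k : ℤ, (⨆ y : Metric.ball (0 : ℂ) b, ‖ghat k (y : ℂ)‖) * Real.exp (2 * Real.pi * (|k| : ℝ) * a)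

/-- `ψ` (given by its Fourier coefficients `psihat`, vanishing outside the domain) is an
element of `𝒳_{a,b}` with zero average solving the truncated linear equation
`ψ(x+y,y) − ψ(x,y) = y·g^{<K}(x,y)`, expressed on Fourier coefficients as
`ψ̂_k(y)(e^{2πiky} − 1) = y ĝ_k(y)` for `|k| < K` and `= 0` for `|k| ≥ K`. -/
def IsTruncSol (b K : ℝ) (ghat psihat : ℤ → ℂ → ℂ) : Prop :=
  (∀ k, AnalyticOn ℂ (psihat k) (Metric.ball (0 : ℂ) b)) ∧
  (∀ k y, y ∉ Metric.ball (0 : ℂ) b → psihat k y = 0) ∧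
  (∀ y, psihat 0 y = 0) ∧
  (∀ (k : ℤ) (y : ℂ), y ∈ Metric.ball (0 : ℂ) b →
    psihat k y * (Complex.exp (2 * Real.pi * Complex.I * k * y) - 1)
      = y * (if (|k| : ℝ) < K then ghat k y else 0))

open Filter Topology Metric Complex
open scoped Real

/-!
For `0 < |k| < K` and `y` in the ball, `z = 2πiky` lies in the disc `|z| < 2πs < 2π`, where
`e^z = 1` only at `z = 0`. Hence `ψ̂_k(y) = ĝ_k(y) · B(z) / (2πik)` with `B(z) = z/(e^z − 1)`
extended analytically by `B(0) = 1`, and `|ψ̂_k| ≤ |B(z)| |ĝ_k| / 2π ≤ ω(s) |ĝ_k|` pointwise.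
Uniqueness holds because `e^{2πiky} − 1` has only isolated zeros while solutions are continuous.
-/

lemma Complex.exp_ne_one_of_norm_lt {z : ℂ} (hz0 : z ≠ 0) (hz : ‖z‖ < 2 * π) : exp z ≠ 1 := by
  rw [Ne, exp_eq_one_iff]
  rintro ⟨n, rfl⟩
  have hn : n ≠ 0 := by rintro rfl; simp at hz0
  have hn1 : (1 : ℝ) ≤ |(n : ℝ)| := by exact_mod_cast Int.one_le_abs hn
  have hnorm : ‖(n : ℂ) * (2 * π * I)‖ = |(n : ℝ)| * (2 * π) := by
    simp [abs_of_pos Real.pi_pos]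
  rw [hnorm] at hz
  nlinarith [Real.pi_pos]

lemma differentiable_dslope_exp : Differentiable ℂ (dslope exp 0) := fun z =>
  ((differentiableOn_dslope univ_mem).2 differentiable_exp.differentiableOn z trivial)
    |>.differentiableAt univ_mem

lemma dslope_exp_ne_zero {z : ℂ} (hz : ‖z‖ < 2 * π) : dslope exp 0 z ≠ 0 := by
  rcases eq_or_ne z 0 with rfl | hz0
  · simp [dslope_same]
  · rw [dslope_of_ne _ hz0, slope_def_field, sub_zero, exp_zero]
    exact div_ne_zero (sub_ne_zero.2 (exp_ne_one_of_norm_lt hz0 hz)) hz0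

/-- `z / (e^z - 1)` with its removable singularity at `0` filled in by the value `1`. -/
noncomputable def divExpSubOne (z : ℂ) : ℂ := (dslope exp 0 z)⁻¹

lemma divExpSubOne_of_ne_zero {z : ℂ} (hz : z ≠ 0) : divExpSubOne z = z / (exp z - 1) := by
  rw [divExpSubOne, dslope_of_ne _ hz, slope_def_field, inv_div, sub_zero, exp_zero]

lemma divExpSubOne_mul_exp_sub_one {z : ℂ} (hz : ‖z‖ < 2 * π) :
    divExpSubOne z * (exp z - 1) = z := by
  have h := sub_smul_dslope exp 0 z
  rw [sub_zero, exp_zero, smul_eq_mul] at h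
  rw [divExpSubOne, ← h, mul_left_comm, inv_mul_cancel₀ (dslope_exp_ne_zero hz), mul_one]

lemma analyticAt_divExpSubOne {z : ℂ} (hz : ‖z‖ < 2 * π) : AnalyticAt ℂ divExpSubOne z :=
  (differentiable_dslope_exp.analyticAt z).inv (dslope_exp_ne_zero hz)

lemma norm_div_exp_sub_one_le (z : ℂ) : ‖z / (exp z - 1)‖ ≤ ‖divExpSubOne z‖ := by
  rcases eq_or_ne z 0 with rfl | hz0
  · simp
  · rw [divExpSubOne_of_ne_zero hz0]

lemma norm_divExpSubOne_le_iSup {r : ℝ} (hr0 : 0 < r) (hr : r < 2 * π) {z : ℂ} (hz : ‖z‖ ≤ r) :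
    ‖divExpSubOne z‖ ≤ ⨆ w : {w : ℂ // ‖w‖ ≤ r}, ‖(w : ℂ) / (exp w - 1)‖ := by
  have hcont : ContinuousOn divExpSubOne (closedBall 0 r) := fun w hw =>
    (analyticAt_divExpSubOne ((mem_closedBall_zero_iff.1 hw).trans_lt hr)).continuousAt
      |>.continuousWithinAt
  obtain ⟨C, hC⟩ := (isCompact_closedBall (0 : ℂ) r).exists_bound_of_continuousOn hcont
  have hbdd : BddAbove (Set.range fun w : {w : ℂ // ‖w‖ ≤ r} => ‖(w : ℂ) / (exp w - 1)‖) :=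
    ⟨C, by
      rintro _ ⟨w, rfl⟩
      exact (norm_div_exp_sub_one_le w).trans (hC w (mem_closedBall_zero_iff.2 w.2))⟩
  have hpunct : ∀ w : ℂ, ‖w‖ ≤ r → w ≠ 0 →
      ‖divExpSubOne w‖ ≤ ⨆ w : {w : ℂ // ‖w‖ ≤ r}, ‖(w : ℂ) / (exp w - 1)‖ := fun w hw hw0 => by
    rw [divExpSubOne_of_ne_zero hw0]
    exact le_ciSup hbdd (⟨w, hw⟩ : {w : ℂ // ‖w‖ ≤ r})
  rcases eq_or_ne z 0 with rfl | hz0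
  · have hlim := ((analyticAt_divExpSubOne (by rw [norm_zero]; linarith)).continuousAt.norm
      ).tendsto.mono_left (nhdsWithin_le_nhds (s := {(0 : ℂ)}ᶜ))
    refine le_of_tendsto hlim ?_
    filter_upwards [nhdsWithin_le_nhds (closedBall_mem_nhds (0 : ℂ) hr0), self_mem_nhdsWithin]
      with w hw hw0 using hpunct w (mem_closedBall_zero_iff.1 hw) hw0
  · exact hpunct z hz hz0

lemma norm_two_pi_I_mul_intCast (k : ℤ) : ‖2 * π * I * k‖ = 2 * π * |(k : ℝ)| := by
  simp [abs_of_pos Real.pi_pos]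

lemma norm_two_pi_I_mul_intCast_mul_lt {b s : ℝ} {k : ℤ} {y : ℂ} (hk : |(k : ℝ)| < s / b)
    (hy : y ∈ ball (0 : ℂ) b) : ‖2 * π * I * k * y‖ < 2 * π * s := by
  rw [mem_ball_zero_iff] at hy
  have hb : 0 < b := (norm_nonneg y).trans_lt hy
  have hky : |(k : ℝ)| * ‖y‖ < s := calc
    |(k : ℝ)| * ‖y‖ ≤ |(k : ℝ)| * b := by gcongr
    _ < s / b * b := by gcongr
    _ = s := div_mul_cancel₀ s hb.ne'
  rw [norm_mul, norm_two_pi_I_mul_intCast, mul_assoc]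
  gcongr

lemma norm_two_pi_I_mul_intCast_mul_lt_two_pi {b s : ℝ} (hs : s < 1) {k : ℤ}
    (hk : |(k : ℝ)| < s / b) {y : ℂ} (hy : y ∈ ball (0 : ℂ) b) : ‖2 * π * I * k * y‖ < 2 * π :=
  (norm_two_pi_I_mul_intCast_mul_lt hk hy).trans (by nlinarith [Real.pi_pos])

lemma ContinuousAt.eq_zero_of_eventually_mul_eq_zero {𝕜 : Type*} [NontriviallyNormedField 𝕜]
    {f h : 𝕜 → 𝕜} {y : 𝕜} (hf : ContinuousAt f y) (hh : AnalyticAt 𝕜 h y)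
    (hh0 : ¬ ∀ᶠ z in 𝓝 y, h z = 0) (hfh : ∀ᶠ z in 𝓝 y, f z * h z = 0) : f y = 0 := by
  have hf0 : f =ᶠ[𝓝[≠] y] fun _ => 0 := by
    filter_upwards [hh.eventually_eq_zero_or_eventually_ne_zero.resolve_left hh0,
      nhdsWithin_le_nhds hfh] with z hz hfz using (mul_eq_zero.1 hfz).resolve_right hz
  exact tendsto_nhds_unique (hf.tendsto.mono_left nhdsWithin_le_nhds)
    (tendsto_const_nhds.congr' hf0.symm)

lemma not_eventually_exp_mul_sub_one_eq_zero {c : ℂ} (hc : c ≠ 0) (y : ℂ) :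
    ¬ ∀ᶠ z in 𝓝 y, exp (c * z) - 1 = 0 := by
  intro h
  have hderiv : HasDerivAt (fun z => exp (c * z) - 1) (exp (c * y) * c) y :=
    (((hasDerivAt_id y).const_mul c).cexp.sub_const 1).congr_deriv (by simp)
  have h0 := (hderiv.congr_of_eventuallyEq (h.mono fun z hz => hz.symm)).unique
    (hasDerivAt_const y (0 : ℂ))
  exact mul_ne_zero (exp_ne_zero _) hc h0

namespace IsTruncSol

variable {b K : ℝ} {ghat psihat : ℤ → ℂ → ℂ}

lemma eq (h : IsTruncSol b K ghat psihat) {psihat' : ℤ → ℂ → ℂ}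
    (h' : IsTruncSol b K ghat psihat') : psihat = psihat' := by
  funext k y
  by_cases hy : y ∈ ball (0 : ℂ) b
  swap
  · rw [h.2.1 k y hy, h'.2.1 k y hy]
  rcases eq_or_ne k 0 with rfl | hk
  · rw [h.2.2.1 y, h'.2.2.1 y]
  have hcont : ∀ φ : ℤ → ℂ → ℂ, IsTruncSol b K ghat φ → ContinuousAt (φ k) y := fun φ hφ =>
    (hφ.1 k).continuousOn.continuousAt (isOpen_ball.mem_nhds hy)
  refine sub_eq_zero.1 ((hcont _ h).sub (hcont _ h')
    |>.eq_zero_of_eventually_mul_eq_zero (h := fun z => exp (2 * π * I * k * z) - 1) ?_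
      (not_eventually_exp_mul_sub_one_eq_zero (by simp [Real.pi_ne_zero, hk]) y) ?_)
  · fun_prop
  · filter_upwards [isOpen_ball.mem_nhds hy] with z hz
    rw [Pi.sub_apply, sub_mul, h.2.2.2 k z hz, h'.2.2.2 k z hz, sub_self]

lemma apply_eq_div {s : ℝ} (h : IsTruncSol b (s / b) ghat psihat) (hs : s < 1) {k : ℤ} {y : ℂ}
    (hk : k ≠ 0) (hkK : |(k : ℝ)| < s / b) (hy : y ∈ ball (0 : ℂ) b) (hy0 : y ≠ 0) :
    psihat k y = y * ghat k y / (exp (2 * π * I * k * y) - 1) := by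
  refine eq_div_of_mul_eq (sub_ne_zero.2 (exp_ne_one_of_norm_lt ?_
    (norm_two_pi_I_mul_intCast_mul_lt_two_pi hs hkK hy))) ?_
  · simp [Real.pi_ne_zero, hk, hy0]
  · rw [h.2.2.2 k y hy, if_pos hkK]

end IsTruncSol

/-- `⨆` over reals is `0` when unbounded, so a pointwise bound `f ≤ C g` only passes to the
suprema when boundedness of `f` forces boundedness of `g`. -/
lemma Real.iSup_le_mul_iSup {ι : Type*} {f g : ι → ℝ} {C : ℝ} (hC : 0 ≤ C) (hg : ∀ i, 0 ≤ g i)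
    (hfg : ∀ i, f i ≤ C * g i) (hbdd : BddAbove (Set.range f) → BddAbove (Set.range g)) :
    ⨆ i, f i ≤ C * ⨆ i, g i := by
  have hCg : 0 ≤ C * ⨆ i, g i := mul_nonneg hC (Real.iSup_nonneg hg)
  by_cases hf : BddAbove (Set.range f)
  · exact Real.iSup_le (fun i => (hfg i).trans (by gcongr; exact le_ciSup (hbdd hf) i)) hCg
  · rwa [Real.iSup_of_not_bddAbove hf]

lemma smallOmega_nonneg (s : ℝ) : 0 ≤ smallOmega s :=
  mul_nonneg (by positivity) (Real.iSup_nonneg fun _ => norm_nonneg _)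

lemma fourierNorm_le_mul {a b C : ℝ} {φ χ : ℤ → ℂ → ℂ}
    (h : ∀ k, ⨆ y : ball (0 : ℂ) b, ‖φ k y‖ ≤ C * ⨆ y : ball (0 : ℂ) b, ‖χ k y‖)
    (hχ : Summable fun k : ℤ =>
      (⨆ y : ball (0 : ℂ) b, ‖χ k y‖) * Real.exp (2 * π * (|k| : ℝ) * a)) :
    fourierNorm a b φ ≤ C * fourierNorm a b χ := by
  have hle : ∀ k : ℤ, (⨆ y : ball (0 : ℂ) b, ‖φ k y‖) * Real.exp (2 * π * (|k| : ℝ) * a)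
      ≤ C * ((⨆ y : ball (0 : ℂ) b, ‖χ k y‖) * Real.exp (2 * π * (|k| : ℝ) * a)) := fun k => by
    rw [← mul_assoc]
    exact mul_le_mul_of_nonneg_right (h k) (Real.exp_pos _).le
  rw [fourierNorm, fourierNorm, ← tsum_mul_left]
  refine Summable.tsum_le_tsum hle ?_ (hχ.mul_left C)
  exact (hχ.mul_left C).of_nonneg_of_le
    (fun k => mul_nonneg (Real.iSup_nonneg fun _ => norm_nonneg _) (Real.exp_pos _).le) hle

/-- For `k = 0` the factor `(2πik)⁻¹` is `0⁻¹ = 0`, so no separate case is needed. -/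
noncomputable def truncSol (b K : ℝ) (ghat : ℤ → ℂ → ℂ) (k : ℤ) : ℂ → ℂ :=
  if |(k : ℝ)| < K then
    (ball (0 : ℂ) b).indicator fun y =>
      (2 * π * I * k)⁻¹ * divExpSubOne (2 * π * I * k * y) * ghat k y
  else 0

section truncSol

variable {b s : ℝ} {ghat : ℤ → ℂ → ℂ}

lemma truncSol_of_lt {k : ℤ} (hk : |(k : ℝ)| < s / b) {y : ℂ} (hy : y ∈ ball (0 : ℂ) b) :
    truncSol b (s / b) ghat k y
      = (2 * π * I * k)⁻¹ * divExpSubOne (2 * π * I * k * y) * ghat k y := by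
  rw [truncSol, if_pos hk, Set.indicator_of_mem hy]

lemma truncSol_of_not_lt {k : ℤ} (hk : ¬ |(k : ℝ)| < s / b) : truncSol b (s / b) ghat k = 0 :=
  if_neg hk

lemma truncSol_zero {K : ℝ} : truncSol b K ghat 0 = 0 := by
  ext y
  unfold truncSol
  split_ifs <;> simp

lemma isTruncSol_truncSol (hs : s < 1) (hganal : ∀ k, AnalyticOn ℂ (ghat k) (ball (0 : ℂ) b))
    (hg0 : ∀ y, ghat 0 y = 0) : IsTruncSol b (s / b) ghat (truncSol b (s / b) ghat) := by
  refine ⟨fun k => ?_, fun k y hy => ?_, fun y => ?_, fun k y hy => ?_⟩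
  · by_cases hk : |(k : ℝ)| < s / b
    · refine AnalyticOnNhd.analyticOn (fun y hy => ?_) |>.congr fun y hy => truncSol_of_lt hk hy
      have hlt := norm_two_pi_I_mul_intCast_mul_lt_two_pi hs hk hy
      exact (analyticAt_const.mul ((analyticAt_divExpSubOne hlt).comp
        (analyticAt_const.mul analyticAt_id))).mul
        ((hganal k).analyticAt (isOpen_ball.mem_nhds hy))
    · rw [truncSol_of_not_lt hk]
      exact analyticOn_const
  · unfold truncSol
    split_ifs <;> simp [hy]
  · rw [truncSol_zero, Pi.zero_apply]
  · by_cases hk : |(k : ℝ)| < s / b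
    · rw [truncSol_of_lt hk hy, if_pos hk]
      rcases eq_or_ne k 0 with rfl | hk0
      · simp [hg0]
      have hB := divExpSubOne_mul_exp_sub_one (norm_two_pi_I_mul_intCast_mul_lt_two_pi hs hk hy)
      calc (2 * π * I * k)⁻¹ * divExpSubOne (2 * π * I * k * y) * ghat k y
            * (exp (2 * π * I * k * y) - 1)
          = (2 * π * I * k)⁻¹ * (divExpSubOne (2 * π * I * k * y)
              * (exp (2 * π * I * k * y) - 1)) * ghat k y := by ring
        _ = y * ghat k y := by rw [hB]; field_simp
    · rw [truncSol_of_not_lt hk, if_neg hk]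
      simp

lemma norm_truncSol_le (hs : s ∈ Set.Ioo (0 : ℝ) 1) (k : ℤ) {y : ℂ} (hy : y ∈ ball (0 : ℂ) b) :
    ‖truncSol b (s / b) ghat k y‖ ≤ smallOmega s * ‖ghat k y‖ := by
  by_cases hk : |(k : ℝ)| < s / b
  swap
  · rw [truncSol_of_not_lt hk, Pi.zero_apply, norm_zero]
    exact mul_nonneg (smallOmega_nonneg s) (norm_nonneg _)
  have hB := norm_divExpSubOne_le_iSup (by nlinarith [Real.pi_pos, hs.1])
    (by nlinarith [Real.pi_pos, hs.2]) (norm_two_pi_I_mul_intCast_mul_lt hk hy).le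
  have hinv : ‖(2 * π * I * k : ℂ)⁻¹‖ ≤ (2 * π)⁻¹ := by
    rw [norm_inv, norm_two_pi_I_mul_intCast]
    rcases eq_or_ne k 0 with rfl | hk0
    · simp [Real.pi_pos.le]
    · exact inv_anti₀ (by positivity)
        (le_mul_of_one_le_right (by positivity) (by exact_mod_cast Int.one_le_abs hk0))
  rw [truncSol_of_lt hk hy, norm_mul, norm_mul, smallOmega, one_div]
  gcongr

lemma bddAbove_of_bddAbove_truncSol (hs : s < 1) {k : ℤ} (hk0 : k ≠ 0) (hk : |(k : ℝ)| < s / b)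
    (hbdd : BddAbove (Set.range fun y : ball (0 : ℂ) b => ‖truncSol b (s / b) ghat k y‖)) :
    BddAbove (Set.range fun y : ball (0 : ℂ) b => ‖ghat k y‖) := by
  obtain ⟨B, hB⟩ := hbdd
  obtain ⟨C, hC⟩ := (isCompact_closedBall (0 : ℂ) (2 * π)).exists_bound_of_continuousOn
    differentiable_dslope_exp.continuous.continuousOn
  refine ⟨‖(2 * π * I * k : ℂ)‖ * C * B, ?_⟩
  rintro _ ⟨⟨y, hy⟩, rfl⟩
  have hlt := norm_two_pi_I_mul_intCast_mul_lt_two_pi hs hk hy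
  have hg : ghat k y = 2 * π * I * k * dslope exp 0 (2 * π * I * k * y)
      * truncSol b (s / b) ghat k y := by
    rw [truncSol_of_lt hk hy, divExpSubOne]
    field_simp [dslope_exp_ne_zero hlt]
  have hCy := hC _ (mem_closedBall_zero_iff.2 hlt.le)
  have hBy : ‖truncSol b (s / b) ghat k y‖ ≤ B := hB ⟨⟨y, hy⟩, rfl⟩
  show ‖ghat k y‖ ≤ _
  rw [hg, norm_mul, norm_mul]
  gcongr
  exact mul_nonneg (norm_nonneg _) ((norm_nonneg _).trans hCy)

lemma iSup_norm_truncSol_le (hs : s ∈ Set.Ioo (0 : ℝ) 1) (k : ℤ) :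
    ⨆ y : ball (0 : ℂ) b, ‖truncSol b (s / b) ghat k y‖
      ≤ smallOmega s * ⨆ y : ball (0 : ℂ) b, ‖ghat k y‖ := by
  have hω := smallOmega_nonneg s
  by_cases hk : k ≠ 0 ∧ |(k : ℝ)| < s / b
  · exact Real.iSup_le_mul_iSup hω (fun _ => norm_nonneg _)
      (fun y => norm_truncSol_le hs k y.2) (bddAbove_of_bddAbove_truncSol hs.2 hk.1 hk.2)
  · have hzero : truncSol b (s / b) ghat k = 0 := by
      rw [not_and_or, not_not] at hk
      rcases hk with rfl | hk
      · exact truncSol_zero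
      · exact truncSol_of_not_lt hk
    have hR := mul_nonneg hω (Real.iSup_nonneg fun y : ball (0 : ℂ) b => norm_nonneg (ghat k y))
    simpa [hzero] using hR

end truncSol

theorem stmt4_general (a b s : ℝ) (hs : s ∈ Set.Ioo (0:ℝ) 1)
    (ghat : ℤ → ℂ → ℂ)
    (hganal : ∀ k, AnalyticOn ℂ (ghat k) (Metric.ball (0 : ℂ) b))
    (hg0 : ∀ y, ghat 0 y = 0)
    (hgsum : Summable fun k : ℤ =>
      (⨆ y : Metric.ball (0 : ℂ) b, ‖ghat k (y : ℂ)‖) * Real.exp (2 * Real.pi * (|k| : ℝ) * a)) :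
    (∃! psihat : ℤ → ℂ → ℂ, IsTruncSol b (s / b) ghat psihat) ∧
    ∀ psihat : ℤ → ℂ → ℂ, IsTruncSol b (s / b) ghat psihat →
      (∀ (k : ℤ) (y : ℂ), k ≠ 0 → (|k| : ℝ) < s / b → y ∈ Metric.ball (0 : ℂ) b → y ≠ 0 →
        psihat k y = y * ghat k y / (Complex.exp (2 * Real.pi * Complex.I * k * y) - 1)) ∧
      fourierNorm a b psihat ≤ smallOmega s * fourierNorm a b ghat := by
  have hsol := isTruncSol_truncSol hs.2 hganal hg0
  refine ⟨⟨_, hsol, fun ψ hψ => hψ.eq hsol⟩, fun ψ hψ => ⟨fun k y hk hkK hy hy0 =>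
    hψ.apply_eq_div hs.2 hk hkK hy hy0, ?_⟩⟩
  rw [hψ.eq hsol]
  exact fourierNorm_le_mul (iSup_norm_truncSol_le hs) hgsum

/-- Let `s ∈ (0,1)`, `K = s/b`, and let `g ∈ 𝒳_{a,b}` have zero average. Then the truncated
linear equation `ψ(x+y,y) − ψ(x,y) = y·g^{<K}(x,y)` has a unique solution `ψ ∈ 𝒳_{a,b}` with
zero average; its Fourier coefficients are `ψ̂_k(y) = y ĝ_k(y)/(e^{2πiky} − 1)` for
`0 < |k| < K`, and it satisfies `‖ψ‖_{a,b} ≤ ω(s) ‖g‖_{a,b}`. -/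
theorem stmt4 (a b s : ℝ) (ha : 0 < a) (hb : 0 < b) (hs : s ∈ Set.Ioo (0:ℝ) 1)
    (ghat : ℤ → ℂ → ℂ)
    (hganal : ∀ k, AnalyticOn ℂ (ghat k) (Metric.ball (0 : ℂ) b))
    (hg0 : ∀ y, ghat 0 y = 0)
    (hgsum : Summable fun k : ℤ =>
      (⨆ y : Metric.ball (0 : ℂ) b, ‖ghat k (y : ℂ)‖) * Real.exp (2 * Real.pi * (|k| : ℝ) * a)) :
    (∃! psihat : ℤ → ℂ → ℂ, IsTruncSol b (s / b) ghat psihat) ∧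
    ∀ psihat : ℤ → ℂ → ℂ, IsTruncSol b (s / b) ghat psihat →
      (∀ (k : ℤ) (y : ℂ), k ≠ 0 → (|k| : ℝ) < s / b → y ∈ Metric.ball (0 : ℂ) b → y ≠ 0 →
        psihat k y = y * ghat k y / (Complex.exp (2 * Real.pi * Complex.I * k * y) - 1)) ∧
      fourierNorm a b psihat ≤ smallOmega s * fourierNorm a b ghat :=
  stmt4_general a b s hs ghat hganal hg0 hgsum
end

section
/- Let f: 𝕋 × (−b,b) → 𝕋 × ℝ be a continuous map of the form f(x,y) = (x + y + O(y^{l+1}), y + y^{l+1} c + O(y^{l+2})) for some constant c and integer l ≥ 1, and suppose f has the intersection property: the image of every homotopically nontrivial closed loop in the cylinder intersects the loop. Then c = 0. -/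
open Filter Topology

lemma abs_le_mul_of_abs_mul_pow_le {c C y : ℝ} (k : ℕ) (hy : 0 < y)
    (h : |c * y ^ (k + 1)| ≤ C * y ^ (k + 2)) : |c| ≤ C * y := by
  have hpow : 0 < y ^ (k + 1) := pow_pos hy _
  rw [abs_mul, abs_of_pos hpow] at h
  refine le_of_mul_le_mul_right ?_ hpow
  calc |c| * y ^ (k + 1) ≤ C * y ^ (k + 2) := h
    _ = C * y * y ^ (k + 1) := by ring

lemma eq_zero_of_forall_abs_le_mul {c C ε : ℝ} (hε : 0 < ε)
    (h : ∀ y, 0 < y → y < ε → |c| ≤ C * y) : c = 0 := by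
  have hlim : Tendsto (fun y => C * y) (𝓝[>] 0) (𝓝 0) := by
    simpa using (continuous_const_mul C).continuousWithinAt.tendsto (x := (0 : ℝ))
  have hbound : ∀ᶠ y in 𝓝[>] (0 : ℝ), |c| ≤ C * y := by
    filter_upwards [Ioo_mem_nhdsGT hε] with y hy using h y hy.1 hy.2
  exact abs_nonpos_iff.mp (ge_of_tendsto hlim hbound)

theorem stmt12_general (b c C δ : ℝ) (l : ℕ) (hδ : 0 < δ) (hδb : δ ≤ b)
    (f : ℝ × ℝ → ℝ × ℝ)
    (hf2 : ∀ x y : ℝ, |y| ≤ δ → |(f (x, y)).2 - (y + c * y ^ (l + 1))| ≤ C * |y| ^ (l + 2))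
    (hint : ∀ γ : ℝ → ℝ × ℝ, Continuous γ →
      (∀ t, γ (t + 1) = ((γ t).1 + 1, (γ t).2)) → (∀ t, |(γ t).2| < b) →
      ∃ (t t' : ℝ) (n : ℤ), f (γ t) = ((γ t').1 + n, (γ t').2)) :
    c = 0 := by
  refine eq_zero_of_forall_abs_le_mul (C := C) hδ fun y hy hyδ => ?_
  -- The image of the horizontal loop at height `y` must meet it, i.e. return to height `y`.
  obtain ⟨t, t', n, hft⟩ := hint (fun t => (t, y)) (by fun_prop) (fun _ => rfl)
    (fun _ => by rw [abs_of_pos hy]; linarith)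
  have hheight : (f (t, y)).2 = y := congrArg Prod.snd hft
  have hest := hf2 t y (by rw [abs_of_pos hy]; exact hyδ.le)
  rw [hheight, abs_of_pos hy, sub_add_cancel_left, abs_neg] at hest
  exact abs_le_mul_of_abs_mul_pow_le l hy hest

/-- Let `f : 𝕋 × (−b,b) → 𝕋 × ℝ` (given by a lift to `ℝ × ℝ`) be a continuous map of the form
`f(x,y) = (x + y + O(y^{l+1}), y + c y^{l+1} + O(y^{l+2}))`, and suppose `f` has the
intersection property: the image of every homotopically nontrivial closed loop in the cylinder
(parametrized as `γ : ℝ → ℝ × ℝ` with `γ(t+1) = γ(t) + (1,0)` and `|γ(t).2| < b`) intersects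
the loop (modulo the deck transformation `(x,y) ↦ (x+n,y)`). Then `c = 0`. -/
theorem stmt12 (b c C δ : ℝ) (l : ℕ) (hl : 1 ≤ l) (hb : 0 < b) (hδ : 0 < δ) (hδb : δ ≤ b)
    (f : ℝ × ℝ → ℝ × ℝ) (hcont : Continuous f)
    (hlift : ∀ x y : ℝ, f (x + 1, y) = ((f (x, y)).1 + 1, (f (x, y)).2))
    (hf1 : ∀ x y : ℝ, |y| ≤ δ → |(f (x, y)).1 - (x + y)| ≤ C * |y| ^ (l + 1))
    (hf2 : ∀ x y : ℝ, |y| ≤ δ → |(f (x, y)).2 - (y + c * y ^ (l + 1))| ≤ C * |y| ^ (l + 2))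
    (hint : ∀ γ : ℝ → ℝ × ℝ, Continuous γ →
      (∀ t, γ (t + 1) = ((γ t).1 + 1, (γ t).2)) → (∀ t, |(γ t).2| < b) →
      ∃ (t t' : ℝ) (n : ℤ), f (γ t) = ((γ t').1 + n, (γ t').2)) :
    c = 0 :=
  stmt12_general b c C δ l hδ hδb f hf2 hint
end
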